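/- A special finite multiset of n triples does not admit a nice two-coloring. -/

import Mathlib

/-- `f` is a *nice (total) `c`-coloring* of the multiset `T` of tuples: the color
classes `f j` sum to `T`, and for each color `j` and every element `i` appearing in
some tuple of `T` there is a tuple of color `j` not containing `i`. -/
def NiceColoring (c : ℕ) (T : Multiset (Finset ℕ+))
    (f : Fin c → Multiset (Finset ℕ+)) : Prop :=
  (∑ j, f j) = T ∧
  ∀ j : Fin c, ∀ i : ℕ+, (∃ t ∈ T, i ∈ t) → ∃ t ∈ f j, i ∉ t

/-- A multiset `T` of `n` triples is *special*: for some three distinct elements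
`a, b, c` it consists of `n - 3` copies of the triple `{a, b, c}` together with three
further triples, one containing `a`, one containing `b` and one containing `c`, whose
other elements are distinct from `a`, `b`, `c`. -/
def Special (T : Multiset (Finset ℕ+)) : Prop :=
  ∃ a b c : ℕ+, a ≠ b ∧ a ≠ c ∧ b ≠ c ∧
    ∃ t₁ t₂ t₃ : Finset ℕ+,
      T = Multiset.replicate (Multiset.card T - 3) {a, b, c} + {t₁, t₂, t₃} ∧
      a ∈ t₁ ∧ b ∉ t₁ ∧ c ∉ t₁ ∧
      a ∉ t₂ ∧ b ∈ t₂ ∧ c ∉ t₂ ∧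
      a ∉ t₃ ∧ b ∉ t₃ ∧ c ∈ t₃

/-!
Let `t₁, t₂, t₃` be the three extra triples, `tᵢ` containing exactly the `i`-th of `a, b, c`.
A triple of `T` avoiding `a` is `t₂` or `t₃`, so every color class of a nice coloring contains
`t₂` or `t₃`, and likewise one of `t₁, t₃` and one of `t₁, t₂`: at least two of the three.
Since each `tᵢ` occurs only once in `T`, two color classes would need four of them.
-/

open Multiset

namespace Multiset

variable {α : Type*}

theorem filter_replicate_of_neg (p : α → Prop) [DecidablePred p] {a : α} (n : ℕ) (h : ¬p a) :
    (replicate n a).filter p = 0 :=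
  filter_eq_nil.2 fun _ hb => eq_of_mem_replicate hb ▸ h

variable [DecidableEq α]

theorem notMem_of_count_add_eq_one {s t : Multiset α} {x : α} (h : count x (s + t) = 1)
    (hs : x ∈ s) : x ∉ t := by
  intro ht
  rw [count_add] at h
  have := count_pos.2 hs
  have := count_pos.2 ht
  omega

theorem count_eq_one_of_filter_eq_singleton {p : α → Prop} [DecidablePred p] {s : Multiset α}
    {x : α} (hx : p x) (h : s.filter p = {x}) : count x s = 1 := by
  rw [← count_filter_of_pos hx, h, count_singleton_self]

/-- Each of `s` and `t` would contain two of the three elements, which occur only once. -/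
theorem not_meets_pairs_of_count_add_eq_one {s t : Multiset α} {x₁ x₂ x₃ : α}
    (h₁ : count x₁ (s + t) = 1) (h₂ : count x₂ (s + t) = 1) (h₃ : count x₃ (s + t) = 1)
    (hs : (x₂ ∈ s ∨ x₃ ∈ s) ∧ (x₁ ∈ s ∨ x₃ ∈ s) ∧ (x₁ ∈ s ∨ x₂ ∈ s)) :
    ¬((x₂ ∈ t ∨ x₃ ∈ t) ∧ (x₁ ∈ t ∨ x₃ ∈ t) ∧ (x₁ ∈ t ∨ x₂ ∈ t)) := by
  have := notMem_of_count_add_eq_one h₁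
  have := notMem_of_count_add_eq_one h₂
  have := notMem_of_count_add_eq_one h₃
  tauto

end Multiset

theorem NiceColoring.mem_or_mem_of_filter_eq_pair {c : ℕ} {T : Multiset (Finset ℕ+)}
    {f : Fin c → Multiset (Finset ℕ+)} (hf : NiceColoring c T f) (j : Fin c) {x : ℕ+}
    {t t' : Finset ℕ+} (hx : ∃ s ∈ T, x ∈ s) (hT : T.filter (x ∉ ·) = {t, t'}) :
    t ∈ f j ∨ t' ∈ f j := by
  obtain ⟨s, hs, hxs⟩ := hf.2 j x hx
  have hsT : s ∈ T := hf.1 ▸ mem_sum.2 ⟨j, Finset.mem_univ j, hs⟩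
  have : s ∈ T.filter (x ∉ ·) := mem_filter.2 ⟨hsT, hxs⟩
  rw [hT, insert_eq_cons, mem_cons, mem_singleton] at this
  rcases this with rfl | rfl
  exacts [.inl hs, .inr hs]

theorem special_no_nice_two_coloring
    (T : Multiset (Finset ℕ+))
    (hspec : Special T) :
    ¬ ∃ f : Fin 2 → Multiset (Finset ℕ+), NiceColoring 2 T f := by
  rintro ⟨f, hf⟩
  obtain ⟨a, b, c, -, -, -, t₁, t₂, t₃, hT, ha₁, hb₁, hc₁, ha₂, hb₂, hc₂, ha₃, hb₃, hc₃⟩ := hspec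
  generalize card T - 3 = n at hT
  subst hT
  have hits (j : Fin 2) :
      (t₂ ∈ f j ∨ t₃ ∈ f j) ∧ (t₁ ∈ f j ∨ t₃ ∈ f j) ∧ (t₁ ∈ f j ∨ t₂ ∈ f j) := by
    refine ⟨hf.mem_or_mem_of_filter_eq_pair j (x := a) ?_ ?_,
      hf.mem_or_mem_of_filter_eq_pair j (x := b) ?_ ?_,
      hf.mem_or_mem_of_filter_eq_pair j (x := c) ?_ ?_⟩ <;>
    simp [filter_add, filter_replicate_of_neg, filter_singleton, *]
  have hsplit : f 0 + f 1 = replicate n {a, b, c} + {t₁, t₂, t₃} := by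
    rw [← Fin.sum_univ_two, hf.1]
  -- `t₁` is the only triple containing `a` but not `b`, and cyclically.
  refine not_meets_pairs_of_count_add_eq_one
    (count_eq_one_of_filter_eq_singleton (p := fun s => a ∈ s ∧ b ∉ s) ⟨ha₁, hb₁⟩ ?_)
    (count_eq_one_of_filter_eq_singleton (p := fun s => b ∈ s ∧ c ∉ s) ⟨hb₂, hc₂⟩ ?_)
    (count_eq_one_of_filter_eq_singleton (p := fun s => c ∈ s ∧ a ∉ s) ⟨hc₃, ha₃⟩ ?_)
    (hits 0) (hits 1) <;>
  rw [hsplit] <;> simp [filter_add, filter_replicate_of_neg, filter_singleton, *]
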